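/- (Fragmentation invariance of the Kyle model.) Let Σ be an n×n real symmetric positive semidefinite matrix and Ω an n×n real symmetric positive definite matrix. Then ker Σ ⊆ ker Λ_kyle(Σ,Ω): for every v ∈ ℝⁿ with Σv = 0 one has Λ_kyle(Σ,Ω) v = 0 and vᵀ Λ_kyle(Σ,Ω) = 0. Equivalently, for every linear subspace V ⊆ ker Σ, Π_V Λ_kyle(Σ,Ω) = 0 and Λ_kyle(Σ,Ω) Π_V = 0, i.e. zero-volatility directions induce no impact under the Kyle model. -/

import Mathlib

open Matrix
open scoped Classical

/-- `sqrtm A` is the unique symmetric positive semidefinite square root of a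
symmetric positive semidefinite real matrix `A` (junk value `0` otherwise). -/
noncomputable def sqrtm {n : ℕ} (A : Matrix (Fin n) (Fin n) ℝ) : Matrix (Fin n) (Fin n) ℝ :=
  if h : A.PosSemidef then
    (h.1.eigenvectorUnitary : Matrix (Fin n) (Fin n) ℝ) *
      diagonal ((↑) ∘ (Real.sqrt ∘ h.1.eigenvalues)) *
      (star h.1.eigenvectorUnitary : Matrix (Fin n) (Fin n) ℝ) else 0

/-- The Kyle cross-impact matrix `Λ_kyle(Σ,Ω) = (√Ω)⁻¹ √(√Ω Σ √Ω) (√Ω)⁻¹`. -/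
noncomputable def kyle {n : ℕ} (S W : Matrix (Fin n) (Fin n) ℝ) : Matrix (Fin n) (Fin n) ℝ :=
  (sqrtm W)⁻¹ * sqrtm (sqrtm W * S * sqrtm W) * (sqrtm W)⁻¹

/-- The matrix of the orthogonal projection of `ℝⁿ` (with the standard inner product)
onto the linear subspace `V`. -/
noncomputable def projMat {n : ℕ} (V : Submodule ℝ (EuclideanSpace ℝ (Fin n))) :
    Matrix (Fin n) (Fin n) ℝ :=
  LinearMap.toMatrix' ((EuclideanSpace.equiv (Fin n) ℝ).toLinearMap ∘ₗ V.subtype ∘ₗ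
    (V.orthogonalProjectionOnto).toLinearMap ∘ₗ ((EuclideanSpace.equiv (Fin n) ℝ).symm.toLinearMap))

/-- The regularizing matrix `Π̄_V + ε Π_V`. -/
noncomputable def reg {n : ℕ} (V : Submodule ℝ (EuclideanSpace ℝ (Fin n))) (ε : ℝ) :
    Matrix (Fin n) (Fin n) ℝ :=
  (1 - projMat V) + ε • projMat V

/-!
With `B = √Ω` (symmetric and invertible) and `M = B Σ B`, we have `Λ = B⁻¹ √M B⁻¹`. If `Σ v = 0`
then `M (B⁻¹ v) = B Σ v = 0`, and since `M = √Mᵀ √M` this forces `√M (B⁻¹ v) = 0`, so `Λ v = 0`.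
As `Λ` is symmetric, also `vᵀ Λ = 0`. For `V ⊆ ker Σ` every column of `Π_V` lies in `V`, which
gives `Λ Π_V = 0`, and transposing gives `Π_V Λ = 0`.
-/

open scoped MatrixOrder

theorem sqrtm_eq_cfcSqrt {n : ℕ} {A : Matrix (Fin n) (Fin n) ℝ} (hA : A.PosSemidef) :
    sqrtm A = CFC.sqrt A := by
  rw [sqrtm, dif_pos hA, CFC.sqrt_eq_cfc, cfc_nnreal_eq_real _ A hA.nonneg, hA.1.cfc_eq]
  simp only [IsHermitian.cfc, Unitary.conjStarAlgAut_apply, RCLike.ofReal_real_eq_id,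
    Real.coe_sqrt, Real.coe_toNNReal']
  congr 3 with i
  simp [max_eq_left (hA.eigenvalues_nonneg i)]

theorem isHermitian_sqrtm {n : ℕ} (A : Matrix (Fin n) (Fin n) ℝ) : (sqrtm A).IsHermitian := by
  by_cases hA : A.PosSemidef
  · exact sqrtm_eq_cfcSqrt hA ▸ (CFC.sqrt_nonneg A).posSemidef.isHermitian
  · simp [sqrtm, hA]

theorem sqrtm_mul_self {n : ℕ} {A : Matrix (Fin n) (Fin n) ℝ} (hA : A.PosSemidef) :
    sqrtm A * sqrtm A = A :=
  sqrtm_eq_cfcSqrt hA ▸ CFC.sqrt_mul_sqrt_self A hA.nonneg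

theorem sqrtm_mulVec_eq_zero {n : ℕ} {A : Matrix (Fin n) (Fin n) ℝ} (hA : A.PosSemidef)
    {v : Fin n → ℝ} (hv : A *ᵥ v = 0) : sqrtm A *ᵥ v = 0 := by
  rwa [← conjTranspose_mul_self_mulVec_eq_zero, (isHermitian_sqrtm A).eq, sqrtm_mul_self hA]

theorem isUnit_det_sqrtm {n : ℕ} {A : Matrix (Fin n) (Fin n) ℝ} (hA : A.PosDef) :
    IsUnit (sqrtm A).det := by
  refine isUnit_of_mul_isUnit_left (y := (sqrtm A).det) ?_
  rw [← det_mul, sqrtm_mul_self hA.posSemidef]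
  exact (isUnit_iff_isUnit_det A).mp hA.isUnit

theorem kyle_transpose {n : ℕ} (S W : Matrix (Fin n) (Fin n) ℝ) : (kyle S W)ᵀ = kyle S W := by
  have hB : (sqrtm W)ᵀ = sqrtm W := (isHermitian_sqrtm W).eq
  have hR : (sqrtm (sqrtm W * S * sqrtm W))ᵀ = sqrtm (sqrtm W * S * sqrtm W) :=
    (isHermitian_sqrtm _).eq
  rw [kyle, transpose_mul, transpose_mul, transpose_nonsing_inv, hB, hR]
  exact (Matrix.mul_assoc _ _ _).symm

theorem kyle_mulVec_eq_zero {n : ℕ} {S W : Matrix (Fin n) (Fin n) ℝ} (hS : S.PosSemidef)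
    (hW : W.PosDef) {v : Fin n → ℝ} (hv : S *ᵥ v = 0) : kyle S W *ᵥ v = 0 := by
  set B := sqrtm W
  have hBH : Bᴴ = B := (isHermitian_sqrtm W).eq
  have hBinv : B * B⁻¹ = 1 := mul_nonsing_inv B (isUnit_det_sqrtm hW)
  have hM : (B * S * B).PosSemidef := by
    simpa only [hBH] using hS.mul_mul_conjTranspose_same B
  have hMv : (B * S * B) *ᵥ (B⁻¹ *ᵥ v) = 0 := by
    rw [mulVec_mulVec, Matrix.mul_assoc, Matrix.mul_assoc, hBinv, Matrix.mul_one,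
      ← mulVec_mulVec, hv, mulVec_zero]
  rw [kyle, ← mulVec_mulVec, ← mulVec_mulVec, sqrtm_mulVec_eq_zero hM hMv, mulVec_zero]

theorem projMat_mulVec {n : ℕ} (V : Submodule ℝ (EuclideanSpace ℝ (Fin n))) (x : Fin n → ℝ) :
    projMat V *ᵥ x = EuclideanSpace.equiv (Fin n) ℝ (V.starProjection (WithLp.toLp 2 x)) := by
  rw [projMat, ← toLin'_apply, toLin'_toMatrix']
  rfl

theorem toEuclideanLin_projMat {n : ℕ} (V : Submodule ℝ (EuclideanSpace ℝ (Fin n))) :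
    (projMat V).toEuclideanLin = V.starProjection := by
  ext1 x
  rw [toLpLin_apply, projMat_mulVec]
  rfl

theorem projMat_transpose {n : ℕ} (V : Submodule ℝ (EuclideanSpace ℝ (Fin n))) :
    (projMat V)ᵀ = projMat V :=
  (isSymmetric_toEuclideanLin_iff.mp (toEuclideanLin_projMat V ▸ V.starProjection_isSymmetric)).eq

theorem kyle_mul_projMat_eq_zero {n : ℕ} {S W : Matrix (Fin n) (Fin n) ℝ} (hS : S.PosSemidef)
    (hW : W.PosDef) {V : Submodule ℝ (EuclideanSpace ℝ (Fin n))}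
    (hV : ∀ v ∈ V, S *ᵥ EuclideanSpace.equiv (Fin n) ℝ v = 0) : kyle S W * projMat V = 0 := by
  refine ext_iff_mulVec.mpr fun x => ?_
  rw [← mulVec_mulVec, projMat_mulVec, zero_mulVec]
  exact kyle_mulVec_eq_zero hS hW (hV _ (V.starProjection_apply_mem _))

/-- fragmentation invariance of the Kyle model: zero-volatility directions
induce no impact. -/
theorem kyle_fragmentation_invariant {n : ℕ}
    (S W : Matrix (Fin n) (Fin n) ℝ) (hS : S.PosSemidef) (hW : W.PosDef) :
    (∀ v : Fin n → ℝ, S.mulVec v = 0 →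
      (kyle S W).mulVec v = 0 ∧ v ᵥ* kyle S W = 0) ∧
    (∀ V : Submodule ℝ (EuclideanSpace ℝ (Fin n)),
      (∀ v ∈ V, S.mulVec (EuclideanSpace.equiv (Fin n) ℝ v) = 0) →
      projMat V * kyle S W = 0 ∧ kyle S W * projMat V = 0) := by
  refine ⟨fun v hv => ⟨kyle_mulVec_eq_zero hS hW hv, ?_⟩,
    fun V hV => ⟨?_, kyle_mul_projMat_eq_zero hS hW hV⟩⟩
  · rw [← kyle_transpose, vecMul_transpose]
    exact kyle_mulVec_eq_zero hS hW hv
  · rw [← transpose_eq_zero, transpose_mul, kyle_transpose, projMat_transpose]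
    exact kyle_mul_projMat_eq_zero hS hW hV
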